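/- arXiv:1609.00114 — 4 statements merged into one kernel-verified Lean document; each statement's English description precedes it below -/
import Mathlib

section
/- Let G be a connected graph on n vertices. Then e(G) ≥ 2H(G) − C(n,2), with equality if and only if the diameter of G is at most 2. -/
open SimpleGraph Finset

/-- The Wiener index: sum of distances over unordered pairs of vertices. -/
noncomputable def wienerIndex {V : Type*} [Fintype V] (G : SimpleGraph V) : ℝ :=
  (∑ u : V, ∑ v : V, (G.dist u v : ℝ)) / 2

/-- The Harary index: sum of reciprocal distances over unordered pairs of vertices. -/
noncomputable def hararyIndex {V : Type*} [Fintype V] (G : SimpleGraph V) : ℝ :=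
  (∑ u : V, ∑ v : V, ((G.dist u v : ℝ))⁻¹) / 2

/-- The number of edges of a graph. -/
noncomputable def numEdges {V : Type*} (G : SimpleGraph V) : ℕ := Nat.card G.edgeSet

/-- A graph is traceable if it has a Hamiltonian path. -/
def IsTraceable {V : Type*} [DecidableEq V] (G : SimpleGraph V) : Prop :=
  ∃ (u v : V) (p : G.Walk u v), p.IsHamiltonian

/-- The join `G ∨ H` of two graphs: disjoint union plus all edges in between. -/
def gJoin {α β : Type*} (G : SimpleGraph α) (H : SimpleGraph β) : SimpleGraph (α ⊕ β) :=
  (G ⊕g H) ⊔ completeBipartiteGraph α β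

/-- `N^k_n = K_k ∨ (K_{n-2k} + k K_1)`. -/
def graphN (n k : ℕ) : SimpleGraph (Fin k ⊕ (Fin (n - 2*k) ⊕ Fin k)) :=
  gJoin (⊤ : SimpleGraph (Fin k)) ((⊤ : SimpleGraph (Fin (n - 2*k))) ⊕g (⊥ : SimpleGraph (Fin k)))

/-- `L^k_n = K_1 ∨ (K_k + K_{n-k-1})`. -/
def graphL (n k : ℕ) : SimpleGraph (Fin 1 ⊕ (Fin k ⊕ Fin (n - k - 1))) :=
  gJoin (⊤ : SimpleGraph (Fin 1)) ((⊤ : SimpleGraph (Fin k)) ⊕g (⊤ : SimpleGraph (Fin (n - k - 1))))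

/-- `N̲^k_n = K_k ∨ (K_{n-2k-1} + (k+1) K_1)`. -/
def graphNbar (n k : ℕ) : SimpleGraph (Fin k ⊕ (Fin (n - 2*k - 1) ⊕ Fin (k + 1))) :=
  gJoin (⊤ : SimpleGraph (Fin k))
    ((⊤ : SimpleGraph (Fin (n - 2*k - 1))) ⊕g (⊥ : SimpleGraph (Fin (k + 1))))

/-- `L̲^k_n = K_{k+1} + K_{n-k-1}`. -/
def graphLbar (n k : ℕ) : SimpleGraph (Fin (k + 1) ⊕ Fin (n - k - 1)) :=
  (⊤ : SimpleGraph (Fin (k + 1))) ⊕g (⊤ : SimpleGraph (Fin (n - k - 1)))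

/-- `B^k_n`: obtained from `K_{n,n}` by deleting the edges of a complete bipartite
subgraph `K_{n-k,k}` (between the first `n-k` left vertices and first `k` right vertices). -/
def graphB (n k : ℕ) : SimpleGraph (Fin n ⊕ Fin n) where
  Adj x y := match x, y with
    | Sum.inl i, Sum.inr j => ¬(i.val < n - k ∧ j.val < k)
    | Sum.inr j, Sum.inl i => ¬(i.val < n - k ∧ j.val < k)
    | _, _ => False
  symm := ⟨by rintro (i | i) (j | j) h <;> simp_all⟩
  loopless := ⟨by rintro (i | i) h <;> simp_all⟩

/-!
A pair of distinct vertices at distance `d ≥ 1` satisfies `2 / d ≤ [d = 1] + 1`, with equality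
exactly when `d ≤ 2`. Summing over all ordered pairs, the left-hand sides add up to `4 H(G)` and
the right-hand sides to `2 e(G) + n (n - 1)`, so `4 H(G) ≤ 2 e(G) + n (n - 1)`, with equality iff
every distance is at most `2`.
-/

lemma two_mul_inv_le_indicator_add_one {d : ℕ} (hd : 1 ≤ d) :
    2 * (d : ℝ)⁻¹ ≤ (if d = 1 then 1 else 0) + 1 := by
  rcases Nat.lt_or_ge d 3 with hd3 | hd3
  · interval_cases d <;> norm_num
  · have : (3 : ℝ) ≤ d := by exact_mod_cast hd3
    rw [if_neg (by omega), mul_inv_le_iff₀ (by positivity)]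
    linarith

lemma two_mul_inv_eq_indicator_add_one_iff {d : ℕ} (hd : 1 ≤ d) :
    2 * (d : ℝ)⁻¹ = (if d = 1 then 1 else 0) + 1 ↔ d ≤ 2 := by
  rcases Nat.lt_or_ge d 3 with hd3 | hd3
  · interval_cases d <;> norm_num
  · have : (3 : ℝ) ≤ d := by exact_mod_cast hd3
    rw [if_neg (by omega), mul_inv_eq_iff_eq_mul₀ (by positivity)]
    constructor <;> intro h <;> [linarith; omega]

lemma Fintype.sum_sum_eq_sum_sum_iff_of_le {ι κ M : Type*} [Fintype ι] [Fintype κ]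
    [AddCommMonoid M] [PartialOrder M] [IsOrderedCancelAddMonoid M] {f g : ι → κ → M}
    (h : ∀ i j, f i j ≤ g i j) :
    ∑ i, ∑ j, f i j = ∑ i, ∑ j, g i j ↔ ∀ i j, f i j = g i j := by
  simp only [← Fintype.sum_prod_type']
  rw [Finset.sum_eq_sum_iff_of_le fun p _ => h p.1 p.2]
  simp

lemma Fintype.sum_sum_ite_eq_zero_one (V : Type*) [Fintype V] [DecidableEq V] :
    ∑ u : V, ∑ v : V, (if u = v then 0 else 1 : ℝ) = Fintype.card V * (Fintype.card V - 1) := by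
  have hrow (u : V) : ∑ v : V, (if u = v then 0 else 1 : ℝ) = Fintype.card V - 1 := by
    rw [Finset.sum_ite, Finset.sum_const_zero, zero_add, Finset.sum_const, nsmul_one,
      Finset.filter_not, Finset.filter_eq, if_pos (Finset.mem_univ u),
      Finset.card_sdiff_of_subset (by simp), Finset.card_univ, Finset.card_singleton,
      Nat.cast_pred (Fintype.card_pos_iff.mpr ⟨u⟩)]
  simp only [hrow, Finset.sum_const, Finset.card_univ, nsmul_eq_mul]

namespace SimpleGraph

variable {V : Type*} {G : SimpleGraph V}

lemma Connected.diam_le_iff [Finite V] (hG : G.Connected) {k : ℕ} :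
    G.diam ≤ k ↔ ∀ u v, G.dist u v ≤ k := by
  have : Nonempty V := hG.nonempty
  refine ⟨fun h u v => (dist_le_diam (connected_iff_ediam_ne_top.mp hG)).trans h, fun h => ?_⟩
  obtain ⟨u, v, huv⟩ := G.exists_dist_eq_diam
  exact huv ▸ h u v

lemma sum_sum_ite_adj_eq_two_mul_numEdges [Fintype V] [DecidableRel G.Adj] :
    ∑ u, ∑ v, (if G.Adj u v then 1 else 0 : ℝ) = 2 * numEdges G := by
  have hrow (u : V) : ∑ v, (if G.Adj u v then 1 else 0 : ℝ) = G.degree u := by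
    rw [Finset.sum_boole, ← card_neighborFinset_eq_degree, neighborFinset_eq_filter]
  rw [Finset.sum_congr rfl fun u _ => hrow u, numEdges, Nat.card_eq_fintype_card,
    ← edgeFinset_card]
  exact_mod_cast G.sum_degrees_eq_twice_card_edges

section PairBound

variable [DecidableEq V] [DecidableRel G.Adj]

-- The diagonal contributes `0` on both sides since `(0 : ℝ)⁻¹ = 0`.
lemma Connected.two_mul_inv_dist_le (hG : G.Connected) (u v : V) :
    2 * (G.dist u v : ℝ)⁻¹ ≤ (if G.Adj u v then 1 else 0) + (if u = v then 0 else 1) := by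
  by_cases huv : u = v
  · simp [huv]
  · simpa [huv, ← dist_eq_one_iff_adj] using
      two_mul_inv_le_indicator_add_one (hG.pos_dist_of_ne huv)

lemma Connected.two_mul_inv_dist_eq_iff (hG : G.Connected) (u v : V) :
    2 * (G.dist u v : ℝ)⁻¹ = (if G.Adj u v then 1 else 0) + (if u = v then 0 else 1) ↔
      G.dist u v ≤ 2 := by
  by_cases huv : u = v
  · simp [huv]
  · simpa [huv, ← dist_eq_one_iff_adj] using
      two_mul_inv_eq_indicator_add_one_iff (hG.pos_dist_of_ne huv)

end PairBound

section Harary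

variable [Fintype V]

lemma four_mul_hararyIndex_eq_sum_sum :
    4 * hararyIndex G = ∑ u, ∑ v, 2 * (G.dist u v : ℝ)⁻¹ := by
  simp only [hararyIndex, ← Finset.mul_sum]
  ring

lemma two_mul_numEdges_add_eq_sum_sum [DecidableEq V] [DecidableRel G.Adj] :
    2 * (numEdges G : ℝ) + Fintype.card V * (Fintype.card V - 1) =
      ∑ u, ∑ v, ((if G.Adj u v then 1 else 0) + (if u = v then 0 else 1)) := by
  simp only [Finset.sum_add_distrib, sum_sum_ite_adj_eq_two_mul_numEdges,
    Fintype.sum_sum_ite_eq_zero_one]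

lemma Connected.four_mul_hararyIndex_le (hG : G.Connected) :
    4 * hararyIndex G ≤ 2 * numEdges G + Fintype.card V * (Fintype.card V - 1) := by
  classical
  rw [four_mul_hararyIndex_eq_sum_sum, two_mul_numEdges_add_eq_sum_sum]
  exact Finset.sum_le_sum fun u _ => Finset.sum_le_sum fun v _ => hG.two_mul_inv_dist_le u v

lemma Connected.four_mul_hararyIndex_eq_iff (hG : G.Connected) :
    4 * hararyIndex G = 2 * numEdges G + Fintype.card V * (Fintype.card V - 1) ↔ G.diam ≤ 2 := by
  classical
  rw [four_mul_hararyIndex_eq_sum_sum, two_mul_numEdges_add_eq_sum_sum,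
    Fintype.sum_sum_eq_sum_sum_iff_of_le hG.two_mul_inv_dist_le, hG.diam_le_iff]
  exact forall₂_congr fun u v => hG.two_mul_inv_dist_eq_iff u v

end Harary

end SimpleGraph

/-- For a connected graph `G` on `n` vertices,
`e(G) ≥ 2H(G) - C(n,2)`, with equality iff the diameter of `G` is at most `2`. -/
theorem edges_ge_harary {n : ℕ} (G : SimpleGraph (Fin n)) (hG : G.Connected) :
    2 * hararyIndex G - (n : ℝ) * ((n : ℝ) - 1) / 2 ≤ (numEdges G : ℝ) ∧
      ((numEdges G : ℝ) = 2 * hararyIndex G - (n : ℝ) * ((n : ℝ) - 1) / 2 ↔ G.diam ≤ 2) := by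
  have hle := hG.four_mul_hararyIndex_le
  have heq := hG.four_mul_hararyIndex_eq_iff
  rw [Fintype.card_fin] at hle heq
  refine ⟨by linarith, ?_⟩
  rw [← heq]
  constructor <;> intro h <;> linarith
end

section
/- Let G be a graph of order n with minimum degree δ(G) ≥ k, where 1 ≤ k ≤ (n−1)/2. If e(G) > max{ C(n−k,2) + k², C(⌈(n+1)/2⌉, 2) + ⌊(n−1)/2⌋² }, then G is Hamiltonian. -/
open SimpleGraph Finset

/-!
Bondy–Chvátal: if `u, v` are nonadjacent and `d(u) + d(v) ≥ n`, then `G` is Hamiltonian as soon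
as `G + uv` is, because a Hamiltonian cycle of `G + uv` through `uv` is a Hamiltonian `u`–`v`
path of `G`, and Ore's rotation closes such a path into a cycle. Hence a non-Hamiltonian `G` lies
in an edge-maximal non-Hamiltonian graph `H` in which every nonadjacent pair has degree sum `< n`.

In `H` take a nonadjacent pair `u, v` of maximal degree sum with `d(u) ≤ d(v)`. Every
non-neighbour of `v` has degree `≤ d(u)`, so counting the edges inside `N[v]` and those at the
non-neighbours gives `e(H) ≤ C(d(v) + 1, 2) + (n - 1 - d(v)) d(u) ≤ C(n - d(u), 2) + d(u)²`.
The right-hand side is convex in `d(u)` and `k ≤ d(u) ≤ (n - 1) / 2`, so it is at most its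
value at one of the two ends.
-/

/-- The number of edges of `graphN n j = K_j ∨ (K_{n-2j} + j K_1)`. -/
def erdosBound (n j : ℕ) : ℕ := (n - j).choose 2 + j ^ 2

theorem choose_two_add_mul_le_erdosBound {n d m : ℕ} (hdm : d ≤ m) (hn : d + m < n) :
    (m + 1).choose 2 + (n - 1 - m) * d ≤ erdosBound n d := by
  have hdm' : (d : ℚ) ≤ m := by exact_mod_cast hdm
  have hn' : (d + m + 1 : ℚ) ≤ n := by exact_mod_cast hn
  have key : ((m + 1).choose 2 + (n - 1 - m) * d : ℕ) ≤ (erdosBound n d : ℚ) := by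
    unfold erdosBound
    push_cast [Nat.cast_choose_two, Nat.cast_sub (by omega : d ≤ n),
      Nat.cast_sub (by omega : m ≤ n - 1), Nat.cast_sub (by omega : 1 ≤ n)]
    -- twice the difference is `(n - 1 - m - d) * (n + m - 3 * d)`
    nlinarith [mul_nonneg (by linarith : (0 : ℚ) ≤ n - 1 - m - d)
      (by linarith : (0 : ℚ) ≤ n + m - 3 * d)]
  exact_mod_cast key

theorem erdosBound_le_max {n k i m : ℕ} (hki : k ≤ i) (him : i ≤ m) (hmn : m ≤ n) :
    erdosBound n i ≤ max (erdosBound n k) (erdosBound n m) := by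
  rcases hki.eq_or_lt with rfl | hki
  · exact le_max_left _ _
  rcases him.eq_or_lt with rfl | him
  · exact le_max_right _ _
  have hki' : (k : ℚ) < i := by exact_mod_cast hki
  have him' : (i : ℚ) < m := by exact_mod_cast him
  -- `2 * erdosBound n j` is a quadratic polynomial in `j` with leading coefficient `3`
  have hconvex : ((m - k) * erdosBound n i : ℚ) ≤
      (m - i) * erdosBound n k + (i - k) * erdosBound n m := by
    unfold erdosBound
    push_cast [Nat.cast_choose_two, Nat.cast_sub (hki.le.trans (him.le.trans hmn)),
      Nat.cast_sub (him.le.trans hmn), Nat.cast_sub hmn]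
    nlinarith [mul_pos (mul_pos (sub_pos.mpr him') (sub_pos.mpr hki'))
      (sub_pos.mpr (hki'.trans him'))]
  by_contra! h
  have hk : (erdosBound n k : ℚ) < erdosBound n i := by
    exact_mod_cast (le_max_left _ _).trans_lt h
  have hm : (erdosBound n m : ℚ) < erdosBound n i := by
    exact_mod_cast (le_max_right _ _).trans_lt h
  nlinarith [mul_lt_mul_of_pos_left hk (sub_pos.mpr him'),
    mul_lt_mul_of_pos_left hm (sub_pos.mpr hki')]

namespace SimpleGraph

variable {V : Type*} {G : SimpleGraph V}

theorem mem_edgeSet_of_mem_edgeSet_sup_edge {u v : V} {e : Sym2 V}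
    (he : e ∈ (G ⊔ edge u v).edgeSet) (hne : e ≠ s(u, v)) : e ∈ G.edgeSet := by
  rw [edgeSet_sup, edgeSet_edge] at he
  exact he.resolve_right fun h => hne h.1

namespace Walk

theorem IsCycle.eq_snd_or_eq_penultimate_of_mem_edges {u v : V} {c : G.Walk u u}
    (hc : c.IsCycle) (hmem : s(u, v) ∈ c.edges) : v = c.snd ∨ v = c.penultimate := by
  obtain _ | ⟨h, p⟩ := c
  · simp at hmem
  rw [cons_isCycle_iff] at hc
  rw [edges_cons, List.mem_cons, Sym2.congr_right] at hmem
  rcases hmem with rfl | hmem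
  · exact .inl (snd_cons _ _).symm
  · have hp : ¬p.Nil := edges_eq_nil.not.mp (List.ne_nil_of_mem hmem)
    exact .inr ((hc.1.eq_penultimate_of_mem_edges hmem).trans
      (penultimate_cons_of_not_nil _ _ hp).symm)

variable [DecidableEq V]

theorem IsHamiltonianCycle.exists_isHamiltonian_of_snd_eq {u v : V}
    {c : (G ⊔ edge u v).Walk u u} (hc : c.IsHamiltonianCycle) (hsnd : c.snd = v) :
    ∃ p : G.Walk v u, p.IsHamiltonian := by
  obtain _ | ⟨h, p⟩ := c
  · exact absurd hc.isCycle (by simp)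
  rw [snd_cons] at hsnd
  subst hsnd
  have hpG : ∀ e ∈ p.edges, e ∈ G.edgeSet := fun e he =>
    mem_edgeSet_of_mem_edgeSet_sup_edge (p.edges_subset_edgeSet he)
      (ne_of_mem_of_not_mem he ((cons_isCycle_iff _ _).mp hc.isCycle).2)
  refine ⟨p.transfer G hpG, fun w => ?_⟩
  simpa using hc.isHamiltonian_tail w

variable [Fintype V]

theorem IsHamiltonian.isHamiltonian_of_adj {a b : V} {p : G.Walk a b} (hp : p.IsHamiltonian)
    (hba : G.Adj b a) (hV : 3 ≤ Fintype.card V) : G.IsHamiltonian := by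
  intro _
  refine ⟨b, cons hba p, isHamiltonianCycle_iff_isCycle_and_length_eq.mpr ⟨?_, ?_⟩⟩
  · refine isCycle_iff_isPath_tail_and_le_length.mpr ⟨by simpa using hp.isPath, ?_⟩
    simp only [length_cons, hp.length_eq]
    omega
  · simp only [length_cons, hp.length_eq]
    omega

theorem IsHamiltonian.card_filter_getVert {a b : V} {p : G.Walk a b} (hp : p.IsHamiltonian)
    (P : V → Prop) [DecidablePred P] :
    #{i ∈ range (Fintype.card V) | P (p.getVert i)} = #{w | P w} := by
  have hlen := hp.length_eq
  have hpos : 0 < Fintype.card V := Fintype.card_pos_iff.mpr ⟨a⟩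
  refine card_nbij p.getVert (fun i hi => by simp_all) (fun i hi j hj hij => ?_) fun w hw => ?_
  · simp only [coe_filter, mem_range, Set.mem_ofPred_eq] at hi hj
    exact hp.isPath.getVert_injOn (by simp; omega) (by simp; omega) hij
  · obtain ⟨i, rfl, hi⟩ := mem_support_iff_exists_getVert.mp (hp.mem_support w)
    simp_all only [coe_filter, mem_univ, true_and, Set.mem_ofPred_eq, mem_range]
    exact ⟨i, ⟨by omega, hw⟩, rfl⟩

theorem IsHamiltonianCycle.reverse {a : V} {c : G.Walk a a} (hc : c.IsHamiltonianCycle) :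
    c.reverse.IsHamiltonianCycle :=
  isHamiltonianCycle_iff_isCycle_and_length_eq.mpr
    ⟨isCycle_reverse.mpr hc.isCycle, by rw [length_reverse, hc.length_eq]⟩

variable [DecidableRel G.Adj]

theorem IsHamiltonian.exists_adj_getVert {u v : V} {p : G.Walk v u} (hp : p.IsHamiltonian)
    (hdeg : Fintype.card V ≤ G.degree u + G.degree v) :
    ∃ i < p.length, G.Adj (p.getVert i) u ∧ G.Adj v (p.getVert (i + 1)) := by
  have hlen : p.length + 1 = Fintype.card V := by
    have := hp.length_eq; have : 0 < Fintype.card V := Fintype.card_pos_iff.mpr ⟨v⟩; omega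
  have hu : #{i ∈ range p.length | G.Adj u (p.getVert i)} = G.degree u := by
    rw [← card_neighborFinset_eq_degree, neighborFinset_eq_filter, ← hp.card_filter_getVert,
      ← hlen, range_add_one, filter_insert, getVert_length]
    simp
  have hv : #{i ∈ range p.length | G.Adj v (p.getVert (i + 1))} = G.degree v := by
    rw [← card_neighborFinset_eq_degree, neighborFinset_eq_filter, ← hp.card_filter_getVert,
      ← hlen, card_filter, card_filter, sum_range_succ']
    simp
  obtain ⟨i, hi⟩ := inter_nonempty_of_card_lt_card_add_card
    (t := {i ∈ range p.length | G.Adj u (p.getVert i)})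
    (u := {i ∈ range p.length | G.Adj v (p.getVert (i + 1))})
    (filter_subset _ _) (filter_subset _ _) (by rw [hu, hv, card_range]; omega)
  simp only [mem_inter, mem_filter, mem_range] at hi
  exact ⟨i, hi.1.1, hi.1.2.symm, hi.2.2⟩

theorem IsHamiltonian.isHamiltonian_of_card_le_degree_add_degree {u v : V} {p : G.Walk v u}
    (hp : p.IsHamiltonian) (hV : 3 ≤ Fintype.card V)
    (hdeg : Fintype.card V ≤ G.degree u + G.degree v) : G.IsHamiltonian := by
  obtain ⟨i, hi, hiu, hvi⟩ := hp.exists_adj_getVert hdeg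
  -- `v → ⋯ → pᵢ → u → ⋯ → pᵢ₊₁`, closed up by the edge `pᵢ₊₁ v`
  let q := (p.take i).append (cons hiu (p.drop (i + 1)).reverse)
  have hperm : q.support.Perm p.support := by
    have : q.support = p.support.take (i + 1) ++ (p.support.drop (i + 1)).reverse := by
      simp [q, support_append, support_take, Nat.min_eq_left (Nat.succ_le_of_lt hi)]
    rw [this]
    exact ((List.reverse_perm _).append_left _).trans (List.take_append_drop _ _ ▸ .refl _)
  have hq : q.IsHamiltonian := fun w => hperm.count_eq w ▸ hp w
  exact hq.isHamiltonian_of_adj hvi.symm hV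

end Walk

variable [Fintype V] [DecidableEq V] [DecidableRel G.Adj]

open Walk in
theorem IsHamiltonian.of_sup_edge {u v : V} (hV : 3 ≤ Fintype.card V)
    (hdeg : Fintype.card V ≤ G.degree u + G.degree v) (h : (G ⊔ edge u v).IsHamiltonian) :
    G.IsHamiltonian := by
  have : Nontrivial V := Fintype.one_lt_card_iff_nontrivial.mp (by omega)
  obtain ⟨c, hc⟩ := h.exists_isHamiltonianCycle u
  by_cases hmem : s(u, v) ∈ c.edges
  · obtain ⟨c', hc', hsnd⟩ :
        ∃ c' : (G ⊔ edge u v).Walk u u, c'.IsHamiltonianCycle ∧ c'.snd = v := by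
      rcases hc.isCycle.eq_snd_or_eq_penultimate_of_mem_edges hmem with h | h
      · exact ⟨c, hc, h.symm⟩
      · exact ⟨c.reverse, hc.reverse, (snd_reverse c).trans h.symm⟩
    obtain ⟨p, hp⟩ := hc'.exists_isHamiltonian_of_snd_eq hsnd
    exact hp.isHamiltonian_of_card_le_degree_add_degree hV hdeg
  · have hcG : ∀ e ∈ c.edges, e ∈ G.edgeSet := fun e he =>
      mem_edgeSet_of_mem_edgeSet_sup_edge (c.edges_subset_edgeSet he)
        (ne_of_mem_of_not_mem he hmem)
    exact fun _ => ⟨u, c.transfer G hcG, isHamiltonianCycle_iff_isCycle_and_length_eq.mpr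
      ⟨hc.isCycle.transfer hcG, by rw [length_transfer, hc.length_eq]⟩⟩

theorem isHamiltonian_top (hV : 3 ≤ Fintype.card V) : (⊤ : SimpleGraph V).IsHamiltonian := by
  have hl : (univ : Finset V).toList ≠ [] := by
    rw [Ne, toList_eq_nil, ← Ne, ← nonempty_iff_ne_empty, ← card_pos, card_univ]
    omega
  have hchain : (univ : Finset V).toList.IsChain (⊤ : SimpleGraph V).Adj :=
    ((nodup_toList _).pairwise_of_forall_ne fun a _ b _ hab => hab).isChain
  have hp : (Walk.ofSupport _ hl hchain).IsHamiltonian := fun w => by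
    simpa using List.count_eq_one_of_mem (nodup_toList univ) (mem_toList.mpr (mem_univ w))
  exact hp.isHamiltonian_of_card_le_degree_add_degree hV (by simp; omega)

theorem degree_add_degree_lt_of_maximal_not_isHamiltonian
    (hG : Maximal (fun H : SimpleGraph V => ¬H.IsHamiltonian) G) (hV : 3 ≤ Fintype.card V)
    {u v : V} (hne : u ≠ v) (huv : ¬G.Adj u v) : G.degree u + G.degree v < Fintype.card V := by
  by_contra! hdeg
  exact (lt_sup_edge _ _ _ hne huv).not_ge
    (hG.2 (fun h => hG.1 (h.of_sup_edge hV hdeg)) le_sup_left)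

theorem card_edgeFinset_le_choose_two_add_sum_degree (t : Finset V) :
    #G.edgeFinset ≤ (#t).choose 2 + ∑ w ∈ tᶜ, G.degree w := by
  have hinside : #(G.edgeFinset ∩ t.sym2) ≤ (#t).choose 2 := by
    have := map_edgeFinset_induce (G := G) (s := (t : Set V))
    rw [toFinset_coe] at this
    rw [← this, card_map]
    convert card_edgeFinset_le_card_choose_two (G := G.induce (t : Set V)) using 2
    · simp
    · convert (Fintype.card_coe t).symm
      simp
  have hcover :
      G.edgeFinset ⊆ (G.edgeFinset ∩ t.sym2) ∪ tᶜ.biUnion (G.incidenceFinset ·) := by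
    intro e he
    induction e using Sym2.ind with | _ x y => ?_
    by_cases hx : x ∈ t <;> by_cases hy : y ∈ t
    · simp_all
    · exact mem_union_right _ (mem_biUnion.mpr ⟨y, by simpa, by simp_all [incidenceSet]⟩)
    all_goals
      exact mem_union_right _ (mem_biUnion.mpr ⟨x, by simpa, by simp_all [incidenceSet]⟩)
  calc #G.edgeFinset ≤ #(G.edgeFinset ∩ t.sym2) + #(tᶜ.biUnion (G.incidenceFinset ·)) :=
        (card_le_card hcover).trans (card_union_le _ _)
    _ ≤ (#t).choose 2 + ∑ w ∈ tᶜ, G.degree w := by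
        gcongr
        exact card_biUnion_le.trans_eq (by simp)

theorem card_edgeFinset_le_of_degree_le_of_not_adj (v : V) {d : ℕ}
    (hd : ∀ w, w ≠ v → ¬G.Adj v w → G.degree w ≤ d) :
    #G.edgeFinset ≤ (G.degree v + 1).choose 2 + (Fintype.card V - 1 - G.degree v) * d := by
  set t := insert v (G.neighborFinset v)
  have ht : #t = G.degree v + 1 := by
    rw [card_insert_of_notMem (notMem_neighborFinset_self G v), card_neighborFinset_eq_degree]
  have hsum : ∑ w ∈ tᶜ, G.degree w ≤ (Fintype.card V - 1 - G.degree v) * d := by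
    rw [Nat.sub_sub, add_comm, ← ht, ← card_compl]
    refine sum_le_card_nsmul _ _ _ fun w hw => hd w ?_ ?_ <;> simp_all [t]
  calc #G.edgeFinset ≤ (#t).choose 2 + ∑ w ∈ tᶜ, G.degree w :=
        card_edgeFinset_le_choose_two_add_sum_degree t
    _ ≤ _ := by rw [ht]; gcongr

theorem card_edgeFinset_le_max_erdosBound
    (hG : Maximal (fun H : SimpleGraph V => ¬H.IsHamiltonian) G) (hV : 3 ≤ Fintype.card V)
    {k : ℕ} (hk : ∀ v, k ≤ G.degree v) :
    #G.edgeFinset ≤ max (erdosBound (Fintype.card V) k)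
      (erdosBound (Fintype.card V) ((Fintype.card V - 1) / 2)) := by
  let P : Finset (V × V) := {p | p.1 ≠ p.2 ∧ ¬G.Adj p.1 p.2 ∧ G.degree p.1 ≤ G.degree p.2}
  have hmemP {x y : V} (hxy : x ≠ y) (hadj : ¬G.Adj x y) : (x, y) ∈ P ∨ (y, x) ∈ P := by
    rcases le_total (G.degree x) (G.degree y) with h | h
    · exact .inl (by simp [P, hxy, hadj, h])
    · exact .inr (by simp [P, hxy.symm, G.adj_comm, hadj, h])
  have hP : P.Nonempty := by
    obtain ⟨x, y, hxy, hadj⟩ : ∃ x y, x ≠ y ∧ ¬G.Adj x y := by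
      by_contra! h
      exact hG.1 ((isHamiltonian_top hV).mono fun x y hxy => h x y hxy)
    rcases hmemP hxy hadj with h | h <;> exact ⟨_, h⟩
  obtain ⟨⟨u, v⟩, huv, hmax⟩ := exists_max_image P (fun p => G.degree p.1 + G.degree p.2) hP
  obtain ⟨hne, hadj, hle⟩ : u ≠ v ∧ ¬G.Adj u v ∧ G.degree u ≤ G.degree v := by
    simpa [P] using huv
  have hsum := degree_add_degree_lt_of_maximal_not_isHamiltonian hG hV hne hadj
  have hd : ∀ w, w ≠ v → ¬G.Adj v w → G.degree w ≤ G.degree u := fun w hw hvw => by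
    rcases hmemP hw (fun h => hvw h.symm) with h | h
    · have := hmax _ h
      dsimp only at this
      omega
    · have := hmax _ h
      dsimp only at this
      omega
  calc #G.edgeFinset
        ≤ (G.degree v + 1).choose 2 + (Fintype.card V - 1 - G.degree v) * G.degree u :=
        card_edgeFinset_le_of_degree_le_of_not_adj v hd
    _ ≤ erdosBound (Fintype.card V) (G.degree u) := choose_two_add_mul_le_erdosBound hle hsum
    _ ≤ _ := erdosBound_le_max (hk u) (by omega) (by omega)

end SimpleGraph

/-- Erdős. Let `G` be a graph of order `n` with `δ(G) ≥ k`, where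
`1 ≤ k ≤ (n-1)/2`. If `e(G) > max{C(n-k,2) + k², C(⌈(n+1)/2⌉,2) + ⌊(n-1)/2⌋²}`,
then `G` is Hamiltonian. -/
theorem erdos_hamiltonian {n k : ℕ} (G : SimpleGraph (Fin n)) [DecidableRel G.Adj]
    (hk : 1 ≤ k) (hkn : 2 * k + 1 ≤ n) (hδ : k ≤ G.minDegree)
    (he : max (Nat.choose (n - k) 2 + k ^ 2)
        (Nat.choose ((n + 2) / 2) 2 + ((n - 1) / 2) ^ 2) < numEdges G) :
    G.IsHamiltonian := by
  have hV : 3 ≤ Fintype.card (Fin n) := by rw [Fintype.card_fin]; omega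
  by_contra hG
  obtain ⟨H, hGH, hH⟩ :=
    Finite.exists_le_maximal (p := fun H : SimpleGraph (Fin n) => ¬H.IsHamiltonian) hG
  classical
  have hdeg (v : Fin n) : k ≤ H.degree v :=
    (hδ.trans (G.minDegree_le_degree v)).trans (degree_le_of_le hGH)
  have hbound := card_edgeFinset_le_max_erdosBound hH hV hdeg
  have hedges : numEdges G ≤ #H.edgeFinset := by
    rw [numEdges, Nat.card_eq_fintype_card, ← edgeFinset_card]
    exact card_le_card (edgeFinset_mono hGH)
  rw [Fintype.card_fin, erdosBound, erdosBound, show n - (n - 1) / 2 = (n + 2) / 2 by omega]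
    at hbound
  omega
end

section
/- For k ≥ 1 and n ≥ 2k + 2, the graph Nᵏₙ = Kₖ ∨ (K_{n−2k} + kK₁) has diameter 2, is not Hamiltonian, and consequently W(Nᵏₙ) = n(n−1) − e(Nᵏₙ) and H(Nᵏₙ) = (e(Nᵏₙ) + C(n,2))/2. -/
open SimpleGraph Finset

/-! Every vertex of the clique `Kₖ` is adjacent to all other vertices, so two distinct
non-adjacent vertices always have a common neighbour and all distances are `0`, `1` or `2`;
both indices are then determined by the number of vertices and of edges.

A Hamiltonian cycle is a connected spanning subgraph in which every vertex has degree `2`.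
In it the `k` vertices of `kK₁` send `2k` edges into `Kₖ`, which is also the total degree of
`Kₖ` in the cycle; but connectivity forces a further cycle edge from `Kₖ` to `K_{n-2k}`. -/

namespace SimpleGraph

variable {V : Type*} {G : SimpleGraph V} {u v : V}

lemma ediam_le_two_of_commonNeighbors_nonempty
    (h : ∀ u v, u ≠ v → ¬ G.Adj u v → (G.commonNeighbors u v).Nonempty) : G.ediam ≤ 2 :=
  ediam_le_of_edist_le fun u v ↦ not_lt.mp fun h2 ↦ by
    obtain ⟨huv, hadj, hempty⟩ := two_lt_edist_iff.mp h2
    exact (h u v huv hadj).ne_empty hempty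

lemma edist_eq_two_of_ediam_le_two (hG : G.ediam ≤ 2) (huv : u ≠ v) (hadj : ¬ G.Adj u v) :
    G.edist u v = 2 := by
  refine edist_eq_two_iff.mpr ⟨huv, hadj, Set.nonempty_iff_ne_empty.mpr fun hempty ↦ ?_⟩
  exact (edist_le_ediam.trans hG).not_gt (two_lt_edist_iff.mpr ⟨huv, hadj, hempty⟩)

lemma dist_eq_of_ediam_le_two [DecidableEq V] [DecidableRel G.Adj] (hG : G.ediam ≤ 2) (u v : V) :
    G.dist u v = if u = v then 0 else if G.Adj u v then 1 else 2 := by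
  split_ifs with huv hadj
  · rw [huv, dist_self]
  · exact dist_eq_one_iff_adj.mpr hadj
  · rw [dist, edist_eq_two_of_ediam_le_two hG huv hadj]
    rfl

lemma diam_eq_two_of_ediam_le_two (hG : G.ediam ≤ 2) (huv : u ≠ v) (hadj : ¬ G.Adj u v) :
    G.diam = 2 := by
  have h2 := edist_eq_two_of_ediam_le_two hG huv hadj
  have : G.ediam = 2 := le_antisymm hG (h2 ▸ edist_le_ediam)
  rw [diam, this]
  rfl

lemma numEdges_eq_card_edgeFinset [Fintype V] [Fintype G.edgeSet] :
    numEdges G = #G.edgeFinset := by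
  rw [numEdges, Nat.card_eq_fintype_card, edgeFinset_card]

lemma sum_sum_adj_eq_two_mul_numEdges [Fintype V] [DecidableRel G.Adj] :
    ∑ u, ∑ v, (if G.Adj u v then (1 : ℝ) else 0) = 2 * numEdges G := by
  simp only [Finset.sum_boole, ← neighborFinset_eq_filter, card_neighborFinset_eq_degree]
  rw [numEdges_eq_card_edgeFinset, ← Nat.cast_sum, sum_degrees_eq_twice_card_edges]
  push_cast
  rfl

lemma cast_dist_eq_of_ediam_le_two [DecidableEq V] [DecidableRel G.Adj] (hG : G.ediam ≤ 2)
    (u v : V) : (G.dist u v : ℝ) =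
       2 - 2 * (if u = v then 1 else 0) - (if G.Adj u v then 1 else 0) := by
  rw [dist_eq_of_ediam_le_two hG]
  split_ifs with huv hadj <;> first | exact absurd huv hadj.ne | norm_num

lemma inv_cast_dist_eq_of_ediam_le_two [DecidableEq V] [DecidableRel G.Adj] (hG : G.ediam ≤ 2)
    (u v : V) : (G.dist u v : ℝ)⁻¹ =
      (1 - (if u = v then 1 else 0) + (if G.Adj u v then 1 else 0)) / 2 := by
  rw [dist_eq_of_ediam_le_two hG]
  split_ifs with huv hadj <;> first | exact absurd huv hadj.ne | norm_num

lemma wienerIndex_eq_of_ediam_le_two [Fintype V] (hG : G.ediam ≤ 2) :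
    wienerIndex G = Fintype.card V * (Fintype.card V - 1 : ℝ) - numEdges G := by
  classical
  simp only [wienerIndex, cast_dist_eq_of_ediam_le_two hG, Finset.sum_sub_distrib,
    ← Finset.mul_sum, sum_sum_adj_eq_two_mul_numEdges, Finset.sum_ite_eq, Finset.mem_univ,
    if_true, Finset.sum_const, Finset.card_univ, nsmul_eq_mul]
  ring

lemma hararyIndex_eq_of_ediam_le_two [Fintype V] (hG : G.ediam ≤ 2) :
    hararyIndex G = (numEdges G + Fintype.card V * (Fintype.card V - 1 : ℝ) / 2) / 2 := by
  classical
  simp only [hararyIndex, inv_cast_dist_eq_of_ediam_le_two hG, ← Finset.sum_div,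
    Finset.sum_sub_distrib, Finset.sum_add_distrib, sum_sum_adj_eq_two_mul_numEdges,
    Finset.sum_ite_eq, Finset.mem_univ, if_true, Finset.sum_const, Finset.card_univ, nsmul_eq_mul]
  ring

lemma sum_degree_lt_sum_degree_of_adj_notMem [Fintype V] [DecidableRel G.Adj] {I S : Finset V}
    (hI : ∀ u ∈ I, ∀ v, G.Adj u v → v ∈ S) {s w : V} (hs : s ∈ S) (hw : w ∉ I)
    (hsw : G.Adj s w) : ∑ u ∈ I, G.degree u < ∑ v ∈ S, G.degree v :=
  calc ∑ u ∈ I, G.degree u = ∑ u ∈ I, #(S.bipartiteAbove G.Adj u) := by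
        refine Finset.sum_congr rfl fun u hu ↦ ?_
        rw [← card_neighborFinset_eq_degree, neighborFinset_eq_filter, bipartiteAbove]
        congr 1
        ext v
        simpa using fun huv ↦ hI u hu v huv
    _ = ∑ v ∈ S, #(I.bipartiteBelow G.Adj v) :=
        sum_card_bipartiteAbove_eq_sum_card_bipartiteBelow G.Adj
    _ < ∑ v ∈ S, G.degree v := by
        have hsub : ∀ v, I.bipartiteBelow G.Adj v ⊆ G.neighborFinset v := fun v u hu ↦ by
          simp only [bipartiteBelow, mem_filter] at hu
          exact (G.mem_neighborFinset v u).mpr hu.2.symm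
        refine Finset.sum_lt_sum (fun v _ ↦ card_le_card (hsub v)) ⟨s, hs, ?_⟩
        refine card_lt_card ⟨hsub s, fun h ↦ hw ?_⟩
        have := h ((mem_neighborFinset G s w).mpr hsw)
        simp only [bipartiteBelow, mem_filter] at this
        exact this.1

lemma Connected.sum_degree_lt_sum_degree [Fintype V] [DecidableRel G.Adj] (hG : G.Connected)
    {I S : Finset V} (hI : ∀ u ∈ I, ∀ v, G.Adj u v → v ∈ S) {s w : V} (hs : s ∈ S)
    (hwI : w ∉ I) (hwS : w ∉ S) : ∑ u ∈ I, G.degree u < ∑ v ∈ S, G.degree v := by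
  obtain ⟨p⟩ := hG.preconnected w s
  obtain ⟨d, -, ⟨hdI, hdS⟩, hd⟩ :=
    p.exists_boundary_dart {x | x ∉ I ∧ x ∉ S} ⟨hwI, hwS⟩ fun h ↦ h.2 hs
  have hdS' : d.snd ∈ S := by
    by_contra h
    exact hdS (hI _ (by simpa [h] using hd) _ d.adj.symm)
  exact sum_degree_lt_sum_degree_of_adj_notMem hI hdS' hdI d.adj.symm

lemma IsHamiltonian.exists_connected_le_ncard_neighborSet_eq_two [Fintype V] [DecidableEq V]
    (hG : G.IsHamiltonian) (hV : Fintype.card V ≠ 1) :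
    ∃ H ≤ G, H.Connected ∧ ∀ v, (H.neighborSet v).ncard = 2 := by
  obtain ⟨a, p, hp⟩ := hG hV
  refine ⟨p.toSubgraph.spanningCoe, p.toSubgraph.spanningCoe_le, ?_, fun v ↦
    hp.isCycle.ncard_neighborSet_toSubgraph_eq_two (hp.mem_support v)⟩
  exact p.toSubgraph_connected.coe.map ⟨Subtype.val, id⟩
    fun v ↦ ⟨⟨v, p.mem_verts_toSubgraph.mpr (hp.mem_support v)⟩, rfl⟩

/-- The toughness bound `c(G - S) ≤ |S|` of Hamiltonian graphs, in the case where the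
components of `G - S` are the singletons of `I` and at least one more. -/
theorem IsHamiltonian.card_lt_card [Fintype V] [DecidableEq V] (hG : G.IsHamiltonian)
    {I S : Finset V} (hI : ∀ u ∈ I, ∀ v, G.Adj u v → v ∈ S) {s w : V} (hs : s ∈ S)
    (hwI : w ∉ I) (hwS : w ∉ S) :
    #I < #S := by
  classical
  have hV : Fintype.card V ≠ 1 := fun h ↦ hwS (Fintype.card_le_one_iff.mp h.le w s ▸ hs)
  obtain ⟨H, hHG, hH, hdeg⟩ := hG.exists_connected_le_ncard_neighborSet_eq_two hV
  have hdeg' : ∀ v, H.degree v = 2 := fun v ↦ by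
    rw [← card_neighborFinset_eq_degree, ← Set.ncard_coe_finset, coe_neighborFinset, hdeg]
  have := hH.sum_degree_lt_sum_degree (fun u hu v huv ↦ hI u hu v (hHG huv)) hs hwI hwS
  simp only [hdeg', Finset.sum_const, smul_eq_mul] at this
  omega

end SimpleGraph

section graphN

variable {n k : ℕ}

lemma graphN_inl_adj {i : Fin k} {v : Fin k ⊕ (Fin (n - 2 * k) ⊕ Fin k)}
    (hv : Sum.inl i ≠ v) :
    (graphN n k).Adj (Sum.inl i) v := by
  rcases v with j | w <;> simp_all [graphN, gJoin]

lemma graphN_ediam_le_two (hk : 1 ≤ k) : (graphN n k).ediam ≤ 2 := by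
  refine ediam_le_two_of_commonNeighbors_nonempty fun u v huv hadj ↦ ⟨Sum.inl ⟨0, hk⟩, ?_⟩
  have hne : ∀ x y, x ≠ y → ¬ (graphN n k).Adj x y → Sum.inl ⟨0, hk⟩ ≠ x := by
    rintro x y hxy hadj rfl
    exact hadj (graphN_inl_adj hxy)
  exact (mem_commonNeighbors _).mpr ⟨(graphN_inl_adj (hne u v huv hadj)).symm,
    (graphN_inl_adj (hne v u huv.symm fun h ↦ hadj h.symm)).symm⟩

lemma not_isHamiltonian_graphN (hk : 1 ≤ k) (hn : 2 * k < n) : ¬ (graphN n k).IsHamiltonian := by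
  intro hG
  have := hG.card_lt_card (I := univ.map (Function.Embedding.inr.trans .inr))
    (S := univ.map .inl) ?_ (s := Sum.inl ⟨0, hk⟩) (w := Sum.inr (Sum.inl ⟨0, by omega⟩))
    (by simp) (by simp) (by simp)
  · simp at this
  · rintro u hu v huv
    simp only [mem_map, mem_univ, true_and] at hu
    obtain ⟨i, rfl⟩ := hu
    rcases v with j | j | j <;> simp_all [graphN, gJoin]

end graphN

/-- For `k ≥ 1` and `n ≥ 2k + 2`, the graph `Nᵏₙ = Kₖ ∨ (K_{n-2k} + kK₁)`
has diameter `2`, is not Hamiltonian, and `W(Nᵏₙ) = n(n-1) - e(Nᵏₙ)`,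
`H(Nᵏₙ) = (e(Nᵏₙ) + C(n,2))/2`. -/
theorem graphN_properties {n k : ℕ} (hk : 1 ≤ k) (hn : 2 * k + 2 ≤ n) :
    (graphN n k).diam = 2 ∧
    ¬ (graphN n k).IsHamiltonian ∧
    wienerIndex (graphN n k) = (n : ℝ) * ((n : ℝ) - 1) - (numEdges (graphN n k) : ℝ) ∧
    hararyIndex (graphN n k) =
      ((numEdges (graphN n k) : ℝ) + (n : ℝ) * ((n : ℝ) - 1) / 2) / 2 := by
  have hdiam := graphN_ediam_le_two (n := n) hk
  have hcard : Fintype.card (Fin k ⊕ (Fin (n - 2 * k) ⊕ Fin k)) = n := by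
    rw [Fintype.card_sum, Fintype.card_sum, Fintype.card_fin, Fintype.card_fin]
    omega
  refine ⟨?_, not_isHamiltonian_graphN hk (by omega), ?_, ?_⟩
  · exact diam_eq_two_of_ediam_le_two hdiam (u := Sum.inr (Sum.inl ⟨0, by omega⟩))
      (v := Sum.inr (Sum.inr ⟨0, hk⟩)) (by simp) (by simp [graphN, gJoin])
  · rw [wienerIndex_eq_of_ediam_le_two hdiam, hcard]
  · rw [hararyIndex_eq_of_ediam_le_two hdiam, hcard]
end

section
/- For 1 ≤ k ≤ n/2, the graph Bᵏₙ obtained from K_{n,n} by deleting all edges of one complete bipartite subgraph K_{n−k,k} is not Hamiltonian, and its Wiener index satisfies W(Bᵏₙ) = 5n² − 2n − 2e(Bᵏₙ), where e(Bᵏₙ) = n(n−k) + k². -/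
open SimpleGraph Finset

/-!
`Bᵏₙ` is bipartite, the right vertex `k` is adjacent to every left vertex and the left vertex
`n - 1` to every right vertex, so its diameter is at most 3. By parity, two distinct vertices on
the same side are then at distance 2 and two non-adjacent vertices on opposite sides at distance 3,
which gives `W(Bᵏₙ) = 2·n(n-1) + e + 3(n² - e)`.

The `k` right vertices `j < k` have all their neighbours among the `k` left vertices `i ≥ n - k`.
A Hamiltonian cycle is a connected 2-regular spanning subgraph, and double counting its edges
between these two sets shows that the cycle never leaves their union, which misses the left
vertex `0`.
-/

namespace SimpleGraph

variable {V : Type*} {G : SimpleGraph V} {u v : V}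

theorem Reachable.mem_of_adj_closed {S : Set V}
    (hS : ∀ ⦃x y⦄, G.Adj x y → x ∈ S → y ∈ S) (h : G.Reachable u v) (hu : u ∈ S) :
    v ∈ S := by
  rw [reachable_iff_reflTransGen] at h
  induction h with
  | refl => exact hu
  | tail _ hxy ih => exact hS hxy ih

theorem IsRegularOfDegree.adj_mem_of_card_le [Fintype V] [DecidableRel G.Adj] {r : ℕ}
    (hG : G.IsRegularOfDegree r) {C D : Finset V} (hDC : #D ≤ #C)
    (hC : ∀ c ∈ C, ∀ w, G.Adj c w → w ∈ D) :
    ∀ d ∈ D, ∀ w, G.Adj d w → w ∈ C := by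
  have hle : ∀ d ∈ D, #{c ∈ C | G.Adj c d} ≤ #(G.neighborFinset d) := fun d _ =>
    card_le_card fun c hc => by simpa using (mem_filter.mp hc).2.symm
  have hcount : ∑ d ∈ D, #{c ∈ C | G.Adj c d} = ∑ d ∈ D, #(G.neighborFinset d) := by
    refine le_antisymm (sum_le_sum hle) ?_
    calc ∑ d ∈ D, #(G.neighborFinset d) = ∑ _d ∈ D, r := by
          simp only [card_neighborFinset_eq_degree, hG.degree_eq]
      _ ≤ ∑ _c ∈ C, r := by simpa using Nat.mul_le_mul_right r hDC
      _ = ∑ c ∈ C, #{d ∈ D | G.Adj c d} := by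
          refine sum_congr rfl fun c hc => ?_
          rw [← hG.degree_eq c, ← card_neighborFinset_eq_degree]
          congr 1
          ext w
          simpa using fun h => hC c hc w h
      _ = ∑ d ∈ D, #{c ∈ C | G.Adj c d} :=
          sum_card_bipartiteAbove_eq_sum_card_bipartiteBelow G.Adj
  intro d hd w hw
  have heq := (sum_eq_sum_iff_of_le hle).mp hcount d hd
  have hsub :=
    eq_of_subset_of_card_le (fun c hc => by simpa using (mem_filter.mp hc).2.symm) heq.ge
  have : w ∈ G.neighborFinset d := by simpa using hw
  rw [← hsub] at this
  exact (mem_filter.mp this).1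

theorem IsHamiltonian.union_eq_univ [Fintype V] [DecidableEq V] (hG : G.IsHamiltonian)
    {C D : Finset V} (hC : C.Nonempty) (hDC : #D ≤ #C)
    (hCD : ∀ c ∈ C, ∀ w, G.Adj c w → w ∈ D) : C ∪ D = univ := by
  obtain ⟨c, hc⟩ := hC
  rcases subsingleton_or_nontrivial V with hV | hV
  · exact eq_univ_of_forall fun v => mem_union_left _ (Subsingleton.elim c v ▸ hc)
  classical
  obtain ⟨p, hp⟩ := hG.exists_isHamiltonianCycle c
  set H := p.toSubgraph.spanningCoe
  have hHG : H ≤ G := p.toSubgraph.spanningCoe_le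
  have hreg : H.IsRegularOfDegree 2 := fun v => by
    rw [Subgraph.degree_spanningCoe, Subgraph.degree, ← Nat.card_eq_fintype_card,
      Nat.card_coe_set_eq]
    exact hp.isCycle.ncard_neighborSet_toSubgraph_eq_two (hp.mem_support v)
  have hconn : H.Connected :=
    (Subgraph.spanningCoeEquivCoeOfSpanning _ fun v => p.mem_verts_toSubgraph.mpr
      (hp.mem_support v)).connected_iff.mpr p.toSubgraph_connected
  have hD := hreg.adj_mem_of_card_le hDC fun c hc v hcv => hCD c hc v (hHG hcv)
  refine eq_univ_of_forall fun v =>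
    (hconn.preconnected c v).mem_of_adj_closed (fun x y hxy hx => ?_) (mem_union_left _ hc)
  rcases mem_union.mp hx with hx | hx
  · exact mem_union_right _ (hCD x hx y (hHG hxy))
  · exact mem_union_left _ (hD x hx y hxy)

theorem exists_walk_length_eq_dist_le_of_ediam_le {k : ℕ} (hdiam : G.ediam ≤ k) (u v : V) :
    ∃ p : G.Walk u v, p.length = G.dist u v ∧ G.dist u v ≤ k := by
  have hne : G.ediam ≠ ⊤ := ne_top_of_le_ne_top (ENat.natCast_ne_top k) hdiam
  have hconn : G.Connected := have : Nonempty V := ⟨u⟩; connected_of_ediam_ne_top hne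
  obtain ⟨p, hp⟩ := hconn.exists_walk_length_eq_dist u v
  exact ⟨p, hp, (dist_le_diam hne).trans (ENat.toNat_le_of_le_natCast hdiam)⟩

theorem Coloring.dist_eq_two_of_ediam_le_three (c : G.Coloring Bool) (hdiam : G.ediam ≤ 3)
    (huv : u ≠ v) (hc : c u = c v) : G.dist u v = 2 := by
  obtain ⟨p, hp, h3⟩ := exists_walk_length_eq_dist_le_of_ediam_le (k := 3) hdiam u v
  have heven : Even (G.dist u v) := hp ▸ (c.even_length_iff_congr p).mpr (by rw [hc])
  have hpos : 0 < G.dist u v := p.reachable.pos_dist_of_ne huv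
  rw [Nat.even_iff] at heven
  omega

theorem Coloring.dist_eq_three_of_ediam_le_three (c : G.Coloring Bool) (hdiam : G.ediam ≤ 3)
    (hc : c u ≠ c v) (hadj : ¬G.Adj u v) : G.dist u v = 3 := by
  obtain ⟨p, hp, h3⟩ := exists_walk_length_eq_dist_le_of_ediam_le (k := 3) hdiam u v
  have hodd : ¬Even (G.dist u v) :=
    hp ▸ fun h => hc (Bool.eq_iff_iff.mpr ((c.even_length_iff_congr p).mp h))
  have hne1 : G.dist u v ≠ 1 := fun h => hadj (dist_eq_one_iff_adj.mp h)
  rw [Nat.even_iff] at hodd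
  omega

section SumBipartite

variable {α β : Type*} {G : SimpleGraph (α ⊕ β)}

def Coloring.ofLECompleteBipartiteGraph (hG : G ≤ completeBipartiteGraph α β) :
    G.Coloring Bool :=
  (CompleteBipartiteGraph.bicoloring α β).comp (Hom.ofLE hG)

variable [Fintype α] [Fintype β]

theorem numEdges_eq_sum_card_adj_inr [DecidableRel G.Adj]
    (hG : G ≤ completeBipartiteGraph α β) :
    numEdges G = ∑ a, #{b | G.Adj (.inl a) (.inr b)} := by
  classical
  have hbip : G.IsBipartiteWith ↑(univ.map (Function.Embedding.inl : α ↪ α ⊕ β))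
      ↑(univ.map (Function.Embedding.inr : β ↪ α ⊕ β)) := by
    refine ⟨by simp [Set.disjoint_left], ?_⟩
    rintro (a | b) (a' | b') h <;> have := hG h <;> simp_all
  rw [numEdges, Nat.card_eq_fintype_card, ← edgeFinset_card,
    ← isBipartiteWith_sum_degrees_eq_card_edges hbip, sum_map]
  refine sum_congr rfl fun a _ => ?_
  rw [← card_neighborFinset_eq_degree, ← card_map (Function.Embedding.inr : β ↪ α ⊕ β)]
  congr 1
  ext (a' | b)
  · simpa using fun h => by simpa using hG h
  · simp

theorem wienerIndex_eq_of_ediam_le_three (hG : G ≤ completeBipartiteGraph α β)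
    (hdiam : G.ediam ≤ 3) :
    wienerIndex G = Fintype.card α * (Fintype.card α - 1 : ℝ) +
      Fintype.card β * (Fintype.card β - 1 : ℝ) +
      3 * Fintype.card α * Fintype.card β - 2 * numEdges G := by
  classical
  set c := Coloring.ofLECompleteBipartiteGraph hG
  have hll (a a' : α) : (G.dist (.inl a) (.inl a') : ℝ) = 2 - 2 * if a = a' then 1 else 0 := by
    split_ifs with h
    · simp [h]
    · rw [c.dist_eq_two_of_ediam_le_three hdiam (Sum.inl_injective.ne h) rfl]; norm_num
  have hrr (b b' : β) : (G.dist (.inr b) (.inr b') : ℝ) = 2 - 2 * if b = b' then 1 else 0 := by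
    split_ifs with h
    · simp [h]
    · rw [c.dist_eq_two_of_ediam_le_three hdiam (Sum.inr_injective.ne h) rfl]; norm_num
  have hlr (a : α) (b : β) :
      (G.dist (.inl a) (.inr b) : ℝ) = 3 - 2 * if G.Adj (.inl a) (.inr b) then 1 else 0 := by
    split_ifs with h
    · norm_num [dist_eq_one_iff_adj.mpr h]
    · have hc : c (.inl a) ≠ c (.inr b) := Bool.false_ne_true
      rw [c.dist_eq_three_of_ediam_le_three hdiam hc h]
      norm_num
  rw [wienerIndex, numEdges_eq_sum_card_adj_inr hG]
  simp only [Fintype.sum_sum_type, dist_comm (u := Sum.inr _) (v := Sum.inl _), hll, hrr, hlr,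
    sum_add_distrib]
  rw [sum_comm (s := (univ : Finset β)) (t := (univ : Finset α))]
  push_cast [natCast_card_filter]
  simp only [sum_sub_distrib, ← mul_sum, sum_const, card_univ, nsmul_eq_mul, sum_ite_eq,
    mem_univ, if_true, mul_one]
  ring

end SumBipartite

end SimpleGraph

open SimpleGraph

theorem Fin.card_filter_le_val {n m : ℕ} : #{i : Fin n | m ≤ (i : ℕ)} = n - m := by
  have h := card_filter_add_card_filter_not (s := univ) fun i : Fin n => (i : ℕ) < m
  simp only [Fin.card_filter_val_lt, card_univ, Fintype.card_fin, not_lt] at h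
  omega

section GraphB

variable {n k : ℕ}

@[simp] theorem graphB_adj_inl_inr {i j : Fin n} :
    (graphB n k).Adj (.inl i) (.inr j) ↔ ¬((i : ℕ) < n - k ∧ (j : ℕ) < k) := Iff.rfl

@[simp] theorem graphB_adj_inr_inl {i j : Fin n} :
    (graphB n k).Adj (.inr j) (.inl i) ↔ ¬((i : ℕ) < n - k ∧ (j : ℕ) < k) := Iff.rfl

theorem graphB_le_completeBipartiteGraph :
    graphB n k ≤ completeBipartiteGraph (Fin n) (Fin n) := by
  rintro (i | i) (j | j) h <;> first | exact h.elim | simp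

theorem graphB_ediam_le_three (hkn : k < n) : (graphB n k).ediam ≤ 3 := by
  set L : Fin n ⊕ Fin n := .inl ⟨n - 1, by omega⟩
  set R : Fin n ⊕ Fin n := .inr ⟨k, hkn⟩
  have hR (i : Fin n) : (graphB n k).Adj (.inl i) R := by simp [R]
  have hL (j : Fin n) : (graphB n k).Adj L (.inr j) := by simp [L]; omega
  have hLR : (graphB n k).Adj R L := (hR _).symm
  have hcross (i j : Fin n) : (graphB n k).edist (.inl i) (.inr j) ≤ 3 :=
    (edist_le (.cons (hR i) (.cons hLR (.cons (hL j) .nil)))).trans (by simp)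
  refine ediam_le_of_edist_le ?_
  rintro (i | j) (i' | j')
  · exact (edist_le (.cons (hR i) (.cons (hR i').symm .nil))).trans (by norm_num)
  · exact hcross i j'
  · exact edist_comm.trans_le (hcross i' j)
  · exact (edist_le (.cons (hL j).symm (.cons (hL j') .nil))).trans (by norm_num)

theorem numEdges_graphB (hkn : k ≤ n) : numEdges (graphB n k) = n * (n - k) + k ^ 2 := by
  classical
  rw [numEdges_eq_sum_card_adj_inr graphB_le_completeBipartiteGraph]
  have hrow (i : Fin n) : #{j | (graphB n k).Adj (.inl i) (.inr j)} =
      if (i : ℕ) < n - k then n - k else n := by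
    split_ifs with hi
    · simp [hi, Fin.card_filter_le_val]
    · simp [hi]
  simp only [hrow, sum_ite, sum_const, smul_eq_mul, Fin.card_filter_val_lt, not_lt,
    Fin.card_filter_le_val]
  rw [min_eq_right (Nat.sub_le n k)]
  obtain ⟨m, rfl⟩ : ∃ m, n = m + k := ⟨n - k, by omega⟩
  simp only [Nat.add_sub_cancel, Nat.add_sub_cancel_left]
  ring

theorem not_isHamiltonian_graphB (hk : 0 < k) (hkn : k < n) : ¬(graphB n k).IsHamiltonian := by
  intro hH
  set C := (univ.filter fun j : Fin n => (j : ℕ) < k).map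
    (Function.Embedding.inr : Fin n ↪ Fin n ⊕ Fin n)
  set D := (univ.filter fun i : Fin n => n - k ≤ (i : ℕ)).map
    (Function.Embedding.inl : Fin n ↪ Fin n ⊕ Fin n)
  have hC : C.Nonempty := ⟨.inr ⟨0, by omega⟩, by simpa [C]⟩
  have hDC : #D ≤ #C := by
    simp only [C, D, card_map, Fin.card_filter_le_val, Fin.card_filter_val_lt]
    omega
  have hCD : ∀ c ∈ C, ∀ v, (graphB n k).Adj c v → v ∈ D := by
    simp only [C, D, mem_map, mem_filter, mem_univ, true_and]
    rintro _ ⟨j, hj, rfl⟩ (i | j') h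
    · exact ⟨i, by simp at h; omega, rfl⟩
    · exact h.elim
  have h0 : (.inl ⟨0, by omega⟩ : Fin n ⊕ Fin n) ∈ C ∪ D :=
    hH.union_eq_univ hC hDC hCD ▸ mem_univ _
  simp [C, D] at h0
  omega

end GraphB

/-- For `1 ≤ k ≤ n/2`, the graph `Bᵏₙ` (obtained from `K_{n,n}` by deleting
the edges of a complete bipartite subgraph `K_{n-k,k}`) is not Hamiltonian, and
`W(Bᵏₙ) = 5n² - 2n - 2e(Bᵏₙ)`, where `e(Bᵏₙ) = n(n-k) + k²`. -/
theorem graphB_properties {n k : ℕ} (hk : 1 ≤ k) (hkn : 2 * k ≤ n) :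
    ¬ (graphB n k).IsHamiltonian ∧
    wienerIndex (graphB n k) =
      5 * (n : ℝ) ^ 2 - 2 * (n : ℝ) - 2 * (numEdges (graphB n k) : ℝ) ∧
    numEdges (graphB n k) = n * (n - k) + k ^ 2 := by
  have hkn' : k < n := by omega
  refine ⟨not_isHamiltonian_graphB hk hkn', ?_, numEdges_graphB hkn'.le⟩
  rw [wienerIndex_eq_of_ediam_le_three graphB_le_completeBipartiteGraph
    (graphB_ediam_le_three hkn'), Fintype.card_fin]
  ring
end
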